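/- arXiv:2001.02712 — 5 statements merged into one kernel-verified Lean document; each statement's English description precedes it below -/
import Mathlib

section
/- Let α ∈ ℝⁿ with all αᵢ ≠ 0 and |α₁| > Σ_{i=2}^n |αᵢ| (α is dominant). Define the symmetric matrix M by M_{ij} = αᵢαⱼ for i ≠ j, M₁₁ = |α₁|·(Σ_{i≥2}|αᵢ|), and M_{ii} = |αᵢ|·(|α₁| − Σ_{j≠i,j≠1}|αⱼ|) for i ≥ 2. Then the rows of M satisfy the linear dependence M_{1,*} = Σ_{g=2}^n γ₁γ_g M_{g,*}, where γᵢ = sign(αᵢ); in particular M is singular (rank at most n−1). -/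
/-! The matrix agrees with `α αᵀ` off the diagonal, and its diagonal is chosen exactly so that
each column `j` of `Σ_{g ≠ 1} γ₁ γ_g M_{g,*}` telescopes: the off-diagonal terms contribute
`γ₁ α_j Σ_{g ≠ 1, j} |α_g|`, which the diagonal term `γ₁ γ_j M_jj` cancels down to
`γ₁ |α₁| α_j = α₁ α_j = M_{1j}`. Index `1` of the paper is `0 : Fin (n + 1)` here. -/

open Finset

theorem Real.sign_mul_self_eq_abs (x : ℝ) : Real.sign x * x = |x| := by
  rcases lt_trichotomy x 0 with h | rfl | h
  · rw [Real.sign_of_neg h, abs_of_neg h, neg_one_mul]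
  · simp
  · rw [Real.sign_of_pos h, abs_of_pos h, one_mul]

theorem Real.sign_mul_abs_eq_self (x : ℝ) : Real.sign x * |x| = x := by
  rcases lt_trichotomy x 0 with h | rfl | h
  · rw [Real.sign_of_neg h, abs_of_neg h, neg_one_mul, neg_neg]
  · simp
  · rw [Real.sign_of_pos h, abs_of_pos h, one_mul]

theorem Matrix.det_eq_zero_of_row_eq_sum_erase {ι K : Type*} [Fintype ι] [DecidableEq ι] [Field K]
    (M : Matrix ι ι K) (i : ι) (c : ι → K) (hrow : M i = ∑ g ∈ univ.erase i, c g • M g) :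
    M.det = 0 := by
  refine Matrix.det_eq_zero_of_not_linearIndependent_rows fun hli => ?_
  refine linearIndependent_iff_notMem_span.1 hli i ?_
  rw [hrow]
  refine Submodule.sum_mem _ fun g hg => Submodule.smul_mem _ _ (Submodule.subset_span ?_)
  exact ⟨g, by simpa using ne_of_mem_erase hg, rfl⟩

section SignedRowDependence

variable {ι : Type*} [Fintype ι] [DecidableEq ι] {α : ι → ℝ} {M : Matrix ι ι ℝ} {i₀ : ι}

theorem sign_row_combination_apply_self (hoff : ∀ i j, i ≠ j → M i j = α i * α j)
    (h₀ : M i₀ i₀ = |α i₀| * ∑ i ∈ univ.erase i₀, |α i|) :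
    M i₀ i₀ = ∑ g ∈ univ.erase i₀, Real.sign (α i₀) * Real.sign (α g) * M g i₀ := by
  rw [h₀, mul_sum]
  refine sum_congr rfl fun g hg => ?_
  rw [hoff g i₀ (ne_of_mem_erase hg), ← Real.sign_mul_self_eq_abs (α g),
    ← Real.sign_mul_self_eq_abs (α i₀)]
  ring

theorem sign_row_combination_apply_of_ne (hoff : ∀ i j, i ≠ j → M i j = α i * α j)
    {j : ι} (hj : j ≠ i₀)
    (hjj : M j j = |α j| * (|α i₀| - ∑ g ∈ (univ.erase i₀).erase j, |α g|)) :
    M i₀ j = ∑ g ∈ univ.erase i₀, Real.sign (α i₀) * Real.sign (α g) * M g j := by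
  set S := ∑ g ∈ (univ.erase i₀).erase j, |α g|
  have hrest : ∑ g ∈ (univ.erase i₀).erase j, Real.sign (α i₀) * Real.sign (α g) * M g j
      = Real.sign (α i₀) * α j * S := by
    rw [mul_sum]
    refine sum_congr rfl fun g hg => ?_
    rw [hoff g j (ne_of_mem_erase hg), ← Real.sign_mul_self_eq_abs (α g)]
    ring
  rw [← add_sum_erase _ _ (mem_erase.2 ⟨hj, mem_univ j⟩), hrest, hjj, hoff i₀ j hj.symm]
  linear_combination (-α j) * Real.sign_mul_abs_eq_self (α i₀) -
    Real.sign (α i₀) * (|α i₀| - S) * Real.sign_mul_abs_eq_self (α j)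

end SignedRowDependence

theorem stmt_1_general {n : ℕ} (α : Fin (n + 1) → ℝ)
    (M : Matrix (Fin (n + 1)) (Fin (n + 1)) ℝ)
    (hoff : ∀ i j, i ≠ j → M i j = α i * α j)
    (h11 : M 0 0 = |α 0| * ∑ i ∈ Finset.univ.erase 0, |α i|)
    (hdiag : ∀ i, i ≠ 0 →
      M i i = |α i| * (|α 0| - ∑ j ∈ (Finset.univ.erase 0).erase i, |α j|)) :
    (∀ j, M 0 j = ∑ g ∈ Finset.univ.erase 0,
        Real.sign (α 0) * Real.sign (α g) * M g j) ∧ M.det = 0 := by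
  have hrow : ∀ j, M 0 j = ∑ g ∈ univ.erase 0, Real.sign (α 0) * Real.sign (α g) * M g j := by
    intro j
    rcases eq_or_ne j 0 with rfl | hj
    · exact sign_row_combination_apply_self hoff h11
    · exact sign_row_combination_apply_of_ne hoff hj (hdiag j hj)
  refine ⟨hrow, M.det_eq_zero_of_row_eq_sum_erase 0 (fun g => Real.sign (α 0) * Real.sign (α g)) ?_⟩
  ext j
  simpa [Finset.sum_apply] using hrow j

theorem stmt_1 {n : ℕ} (α : Fin (n + 1) → ℝ)
    (M : Matrix (Fin (n + 1)) (Fin (n + 1)) ℝ)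
    (hα : ∀ i, α i ≠ 0)
    (hdom : ∑ i ∈ Finset.univ.erase 0, |α i| < |α 0|)
    (hoff : ∀ i j, i ≠ j → M i j = α i * α j)
    (h11 : M 0 0 = |α 0| * ∑ i ∈ Finset.univ.erase 0, |α i|)
    (hdiag : ∀ i, i ≠ 0 →
      M i i = |α i| * (|α 0| - ∑ j ∈ (Finset.univ.erase 0).erase i, |α j|)) :
    (∀ j, M 0 j = ∑ g ∈ Finset.univ.erase 0,
        Real.sign (α 0) * Real.sign (α g) * M g j) ∧ M.det = 0 :=
  stmt_1_general α M hoff h11 hdiag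
end

section
/- Let α ∈ ℝⁿ with all αᵢ ≠ 0, and define M by M_{ij} = αᵢαⱼ for i≠j, M₁₁ = |α₁|·(Σ_{i≥2}|αᵢ|), M_{ii} = |αᵢ|·(|α₁| − Σ_{j≠i,1}|αⱼ|) for i ≥ 2. Define Φ ∈ ℝⁿ by Φ₁ = 1 and Φᵢ = −sign(α₁αᵢ) for i ≥ 2. Then MΦ = 0. -/
/-!
Off the diagonal `M` agrees with `α αᵀ`, so `M = α αᵀ + diag d` and
`(M Φ)ᵢ = αᵢ ⟪α, Φ⟫ + dᵢ Φᵢ`. Since `αⱼ sign (α₀ αⱼ) = sign α₀ |αⱼ|`, the inner product is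
`⟪α, Φ⟫ = α₀ - sign α₀ · T` with `T = ∑_{j ≠ 0} |αⱼ|`, and each row vanishes by
`sign x · x = |x|` and `sign x · |x| = x`.
-/

open Finset

namespace Real

theorem sign_mul_self_eq_abs_s2 (x : ℝ) : sign x * x = |x| := by
  rcases lt_trichotomy x 0 with hx | rfl | hx
  · rw [sign_of_neg hx, abs_of_neg hx, neg_one_mul]
  · simp
  · rw [sign_of_pos hx, abs_of_pos hx, one_mul]

theorem sign_mul_abs_eq_self_s2 (x : ℝ) : sign x * |x| = x := by
  rcases lt_trichotomy x 0 with hx | rfl | hx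
  · rw [sign_of_neg hx, abs_of_neg hx, neg_one_mul, neg_neg]
  · simp
  · rw [sign_of_pos hx, abs_of_pos hx, one_mul]

theorem sign_mul (x y : ℝ) : sign (x * y) = sign x * sign y := by
  rcases lt_trichotomy x 0 with hx | hx | hx <;>
    rcases lt_trichotomy y 0 with hy | hy | hy <;>
    simp [sign_of_neg, sign_of_pos, hx, hy, mul_pos_of_neg_of_neg, mul_neg_of_neg_of_pos,
      mul_neg_of_pos_of_neg]

end Real

namespace Matrix

variable {m R : Type*} [DecidableEq m] [CommRing R]

theorem eq_vecMulVec_add_diagonal {M : Matrix m m R} {v : m → R}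
    (hoff : ∀ i j, i ≠ j → M i j = v i * v j) :
    M = vecMulVec v v + diagonal fun i ↦ M i i - v i * v i := by
  ext i j
  by_cases hij : i = j
  · subst hij
    simp [vecMulVec_apply]
  · simp [vecMulVec_apply, hij, hoff i j hij]

theorem mulVec_apply_of_offDiag_eq [Fintype m] {M : Matrix m m R} {v : m → R}
    (hoff : ∀ i j, i ≠ j → M i j = v i * v j) (x : m → R) (i : m) :
    (M *ᵥ x) i = v i * (v ⬝ᵥ x) + (M i i - v i * v i) * x i := by
  conv_lhs => rw [eq_vecMulVec_add_diagonal hoff]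
  rw [add_mulVec, Pi.add_apply, vecMulVec_mulVec, mulVec_diagonal, Pi.smul_apply,
    MulOpposite.smul_eq_mul_unop, MulOpposite.unop_op, mul_comm]

end Matrix

theorem dotProduct_eq_sub_sign_mul_sum_abs {n : ℕ} (α Φ : Fin (n + 1) → ℝ) (hΦ0 : Φ 0 = 1)
    (hΦ : ∀ i, i ≠ 0 → Φ i = -Real.sign (α 0 * α i)) :
    α ⬝ᵥ Φ = α 0 - Real.sign (α 0) * ∑ i ∈ univ.erase 0, |α i| := by
  rw [dotProduct, ← add_sum_erase _ _ (mem_univ 0), hΦ0, mul_one, mul_sum, sub_eq_add_neg,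
    ← sum_neg_distrib]
  congr 1
  refine sum_congr rfl fun j hj ↦ ?_
  rw [hΦ j (ne_of_mem_erase hj), Real.sign_mul]
  linear_combination (-Real.sign (α 0)) * Real.sign_mul_self_eq_abs_s2 (α j)

theorem stmt_2_general {n : ℕ} (α : Fin (n + 1) → ℝ)
    (M : Matrix (Fin (n + 1)) (Fin (n + 1)) ℝ)
    (Φ : Fin (n + 1) → ℝ)
    (hoff : ∀ i j, i ≠ j → M i j = α i * α j)
    (h11 : M 0 0 = |α 0| * ∑ i ∈ Finset.univ.erase 0, |α i|)
    (hdiag : ∀ i, i ≠ 0 →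
      M i i = |α i| * (|α 0| - ∑ j ∈ (Finset.univ.erase 0).erase i, |α j|))
    (hΦ0 : Φ 0 = 1)
    (hΦ : ∀ i, i ≠ 0 → Φ i = -Real.sign (α 0 * α i)) :
    M.mulVec Φ = 0 := by
  funext i
  rw [Matrix.mulVec_apply_of_offDiag_eq hoff, dotProduct_eq_sub_sign_mul_sum_abs α Φ hΦ0 hΦ,
    Pi.zero_apply]
  set T := ∑ i ∈ univ.erase 0, |α i|
  by_cases hi : i = 0
  · subst hi
    rw [h11, hΦ0]
    linear_combination (-T) * Real.sign_mul_self_eq_abs_s2 (α 0)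
  · have hT : ∑ j ∈ (univ.erase 0).erase i, |α j| = T - |α i| :=
      sum_erase_eq_sub (mem_erase.mpr ⟨hi, mem_univ i⟩)
    rw [hdiag i hi, hΦ i hi, hT, Real.sign_mul]
    linear_combination (-Real.sign (α 0) * (|α 0| - T)) * Real.sign_mul_abs_eq_self_s2 (α i)
      - Real.sign (α 0) * Real.sign (α i) * abs_mul_abs_self (α i)
      - α i * Real.sign_mul_abs_eq_self_s2 (α 0)

theorem stmt_2 {n : ℕ} (α : Fin (n + 1) → ℝ)
    (M : Matrix (Fin (n + 1)) (Fin (n + 1)) ℝ)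
    (Φ : Fin (n + 1) → ℝ)
    (hα : ∀ i, α i ≠ 0)
    (hoff : ∀ i j, i ≠ j → M i j = α i * α j)
    (h11 : M 0 0 = |α 0| * ∑ i ∈ Finset.univ.erase 0, |α i|)
    (hdiag : ∀ i, i ≠ 0 →
      M i i = |α i| * (|α 0| - ∑ j ∈ (Finset.univ.erase 0).erase i, |α j|))
    (hΦ0 : Φ 0 = 1)
    (hΦ : ∀ i, i ≠ 0 → Φ i = -Real.sign (α 0 * α i)) :
    M.mulVec Φ = 0 :=
  stmt_2_general α M Φ hoff h11 hdiag hΦ0 hΦ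
end

section
/- Let α ∈ ℝⁿ with 0 < |αᵢ| < 1 and suppose α is dominant: |α₁| > Σ_{i=2}^n |αᵢ|. Then Tr_ND − Tr_DM = |α₁|·(|α₁| − 2S) + S² = (|α₁| − S)² > 0, where S = Σ_{i=2}^n |αᵢ|; i.e., the dominant-case solution has strictly smaller trace than the rank-1 solution. -/
open Finset

theorem Finset.sum_mul_sub_sum_erase {ι R : Type*} [DecidableEq ι] [CommRing R]
    (s : Finset ι) (a : ι → R) (c : R) :
    ∑ i ∈ s, a i * (c - ∑ j ∈ s.erase i, a j) =
      (∑ i ∈ s, a i) * c - (∑ i ∈ s, a i) ^ 2 + ∑ i ∈ s, a i ^ 2 := by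
  have hterm : ∀ i ∈ s, a i * (c - ∑ j ∈ s.erase i, a j) =
      a i * c - a i * ∑ j ∈ s, a j + a i ^ 2 := by
    intro i hi
    rw [sum_erase_eq_sub hi]
    ring
  rw [sum_congr rfl hterm, sum_add_distrib, sum_sub_distrib, ← sum_mul, ← sum_mul, sq]

theorem sq_add_sum_sq_sub_eq_sq_sub_sum {ι R : Type*} [DecidableEq ι] [CommRing R]
    (s : Finset ι) (a : ι → R) (c : R) :
    c ^ 2 + ∑ i ∈ s, a i ^ 2 -
        (c * ∑ i ∈ s, a i + ∑ i ∈ s, a i * (c - ∑ j ∈ s.erase i, a j)) =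
      (c - ∑ i ∈ s, a i) ^ 2 := by
  rw [sum_mul_sub_sum_erase]
  ring

theorem stmt_6_general {n : ℕ} (α : Fin (n + 1) → ℝ)
    (hdom : ∑ i ∈ Finset.univ.erase 0, |α i| < |α 0|) :
    (∑ i, (α i) ^ 2) -
        (|α 0| * (∑ i ∈ Finset.univ.erase 0, |α i|) +
          ∑ i ∈ Finset.univ.erase 0,
            |α i| * (|α 0| - ∑ j ∈ (Finset.univ.erase 0).erase i, |α j|)) =
      |α 0| * (|α 0| - 2 * ∑ i ∈ Finset.univ.erase 0, |α i|) +
        (∑ i ∈ Finset.univ.erase 0, |α i|) ^ 2 ∧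
    (∑ i, (α i) ^ 2) -
        (|α 0| * (∑ i ∈ Finset.univ.erase 0, |α i|) +
          ∑ i ∈ Finset.univ.erase 0,
            |α i| * (|α 0| - ∑ j ∈ (Finset.univ.erase 0).erase i, |α j|)) =
      (|α 0| - ∑ i ∈ Finset.univ.erase 0, |α i|) ^ 2 ∧
    0 < (∑ i, (α i) ^ 2) -
        (|α 0| * (∑ i ∈ Finset.univ.erase 0, |α i|) +
          ∑ i ∈ Finset.univ.erase 0,
            |α i| * (|α 0| - ∑ j ∈ (Finset.univ.erase 0).erase i, |α j|)) := by
  have hgap : (∑ i, (α i) ^ 2) -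
      (|α 0| * (∑ i ∈ Finset.univ.erase 0, |α i|) +
        ∑ i ∈ Finset.univ.erase 0,
          |α i| * (|α 0| - ∑ j ∈ (Finset.univ.erase 0).erase i, |α j|)) =
      (|α 0| - ∑ i ∈ Finset.univ.erase 0, |α i|) ^ 2 := by
    rw [← add_sum_erase _ _ (mem_univ 0)]
    simp_rw [← sq_abs (α _)]
    exact sq_add_sum_sq_sub_eq_sq_sub_sum _ _ _
  refine ⟨by rw [hgap]; ring, hgap, ?_⟩
  rw [hgap]
  exact pow_pos (sub_pos.2 hdom) 2

theorem stmt_6 {n : ℕ} (α : Fin (n + 1) → ℝ)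
    (hα : ∀ i, 0 < |α i| ∧ |α i| < 1)
    (hdom : ∑ i ∈ Finset.univ.erase 0, |α i| < |α 0|) :
    (∑ i, (α i) ^ 2) -
        (|α 0| * (∑ i ∈ Finset.univ.erase 0, |α i|) +
          ∑ i ∈ Finset.univ.erase 0,
            |α i| * (|α 0| - ∑ j ∈ (Finset.univ.erase 0).erase i, |α j|)) =
      |α 0| * (|α 0| - 2 * ∑ i ∈ Finset.univ.erase 0, |α i|) +
        (∑ i ∈ Finset.univ.erase 0, |α i|) ^ 2 ∧
    (∑ i, (α i) ^ 2) -
        (|α 0| * (∑ i ∈ Finset.univ.erase 0, |α i|) +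
          ∑ i ∈ Finset.univ.erase 0,
            |α i| * (|α 0| - ∑ j ∈ (Finset.univ.erase 0).erase i, |α j|)) =
      (|α 0| - ∑ i ∈ Finset.univ.erase 0, |α i|) ^ 2 ∧
    0 < (∑ i, (α i) ^ 2) -
        (|α 0| * (∑ i ∈ Finset.univ.erase 0, |α i|) +
          ∑ i ∈ Finset.univ.erase 0,
            |α i| * (|α 0| - ∑ j ∈ (Finset.univ.erase 0).erase i, |α j|)) :=
  stmt_6_general α hdom
end

section
/- Let α ∈ ℝⁿ with all αᵢ ≠ 0 and α dominant (|α₁| > Σ_{i≥2}|αᵢ|). Define M = Σ_{t,DM} by M_{ij} = αᵢαⱼ (i≠j), M₁₁ = |α₁|Σ_{i≥2}|αᵢ|, M_{ii} = |αᵢ|(|α₁| − Σ_{j≠i,1}|αⱼ|) for i≥2. Then all diagonal entries of D := Σ_x − M, where Σ_x has unit diagonal and off-diagonal entries αᵢαⱼ, are strictly positive, i.e., M_{ii} < 1 for all i, provided additionally 0 < |αᵢ| < 1 for all i. -/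
open Finset

theorem stmt_7_general {n : ℕ} (α : Fin (n + 1) → ℝ)
    (M : Matrix (Fin (n + 1)) (Fin (n + 1)) ℝ)
    (hα : ∀ i, 0 < |α i| ∧ |α i| < 1)
    (hdom : ∑ i ∈ Finset.univ.erase 0, |α i| < |α 0|)
    (h11 : M 0 0 = |α 0| * ∑ i ∈ Finset.univ.erase 0, |α i|)
    (hdiag : ∀ i, i ≠ 0 →
      M i i = |α i| * (|α 0| - ∑ j ∈ (Finset.univ.erase 0).erase i, |α j|)) :
    ∀ i, 0 < 1 - M i i := by
  intro i
  rw [sub_pos]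
  rcases eq_or_ne i 0 with rfl | hi
  · rw [h11]
    exact mul_lt_one_of_nonneg_of_lt_one_left (abs_nonneg _) (hα 0).2 (hdom.trans (hα 0).2).le
  · rw [hdiag i hi]
    have hsum : 0 ≤ ∑ j ∈ (univ.erase 0).erase i, |α j| := sum_nonneg fun j _ => abs_nonneg (α j)
    exact mul_lt_one_of_nonneg_of_lt_one_left (abs_nonneg _) (hα i).2 (by linarith [(hα 0).2])

theorem stmt_7 {n : ℕ} (α : Fin (n + 1) → ℝ)
    (M : Matrix (Fin (n + 1)) (Fin (n + 1)) ℝ)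
    (hα : ∀ i, 0 < |α i| ∧ |α i| < 1)
    (hdom : ∑ i ∈ Finset.univ.erase 0, |α i| < |α 0|)
    (hoff : ∀ i j, i ≠ j → M i j = α i * α j)
    (h11 : M 0 0 = |α 0| * ∑ i ∈ Finset.univ.erase 0, |α i|)
    (hdiag : ∀ i, i ≠ 0 →
      M i i = |α i| * (|α 0| - ∑ j ∈ (Finset.univ.erase 0).erase i, |α j|)) :
    ∀ i, 0 < 1 - M i i :=
  stmt_7_general α M hα hdom h11 hdiag
end

section
/- Let α ∈ ℝⁿ with all αᵢ ≠ 0. Define M by M_{ij} = αᵢαⱼ for i≠j, M₁₁ = |α₁|Σ_{i≥2}|αᵢ|, and M_{ii} = |αᵢ|(|α₁| − Σ_{j≠i,1}|αⱼ|) for i≥2. If α is dominant (|α₁| > Σ_{i≥2}|αᵢ|), then M is positive semidefinite of rank exactly n−1. -/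
/-!
Conjugating by the diagonal matrix of signs of `α` preserves positive semidefiniteness and rank,
and turns `M` into the same matrix built from `|α|`. With `S = ∑_{i ≠ 0} |αᵢ|`, the quadratic
form of the latter is a sum of squares,
  `xᵀ M x = (|α₀| - S) ∑_{i ≠ 0} |αᵢ| (x₀ + xᵢ)² + (∑_{i ≠ 0} |αᵢ| (x₀ + xᵢ))²`,
so it is positive semidefinite under dominance. Under strict dominance, and with all `αᵢ ≠ 0`,
it vanishes exactly when `xᵢ = -x₀` for all `i ≠ 0`. For a positive semidefinite matrix these
isotropic vectors form the kernel, which is therefore the line through `(1, -1, …, -1)`.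
-/

open Finset Matrix

lemma Matrix.dotProduct_mulVec_vecMulVec_add_diagonal {ι R : Type*} [Fintype ι] [DecidableEq ι]
    [CommRing R] (v d x : ι → R) :
    x ⬝ᵥ (vecMulVec v v + diagonal d) *ᵥ x = (v ⬝ᵥ x) ^ 2 + ∑ i, d i * x i ^ 2 := by
  simp only [add_mulVec, dotProduct_add, vecMulVec_mulVec, op_smul_eq_smul, dotProduct_smul,
    smul_eq_mul, dotProduct_comm x v, sq]
  congr 1
  exact sum_congr rfl fun i _ => by rw [mulVec_diagonal]; ring

section DominantMatrix

variable {ι : Type*} [Fintype ι] [DecidableEq ι]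

def tailMass (α : ι → ℝ) (i₀ : ι) : ℝ := ∑ i ∈ univ.erase i₀, |α i|

noncomputable def dominantMatrix (α : ι → ℝ) (i₀ : ι) : Matrix ι ι ℝ :=
  vecMulVec α α + diagonal fun i =>
    |α i| * if i = i₀ then tailMass α i₀ - |α i₀| else |α i₀| - tailMass α i₀

variable (α : ι → ℝ) (i₀ : ι)

@[simp]
lemma tailMass_abs : tailMass |α| i₀ = tailMass α i₀ := by
  simp [tailMass]

lemma dominantMatrix_apply_of_ne {i j : ι} (hij : i ≠ j) :
    dominantMatrix α i₀ i j = α i * α j := by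
  simp [dominantMatrix, vecMulVec_apply, hij]

lemma dominantMatrix_apply_base : dominantMatrix α i₀ i₀ i₀ = |α i₀| * tailMass α i₀ := by
  simp only [dominantMatrix, Matrix.add_apply, vecMulVec_apply, diagonal_apply_eq, ↓reduceIte,
    ← abs_mul_abs_self (α i₀)]
  ring

lemma dominantMatrix_apply_self {i : ι} (hi : i ≠ i₀) :
    dominantMatrix α i₀ i i = |α i| * (|α i₀| - ∑ j ∈ (univ.erase i₀).erase i, |α j|) := by
  have hsplit : tailMass α i₀ = |α i| + ∑ j ∈ (univ.erase i₀).erase i, |α j| :=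
    (add_sum_erase _ _ (mem_erase.mpr ⟨hi, mem_univ i⟩)).symm
  simp only [dominantMatrix, Matrix.add_apply, vecMulVec_apply, diagonal_apply_eq, if_neg hi,
    ← abs_mul_abs_self (α i), hsplit]
  ring

lemma isHermitian_dominantMatrix : (dominantMatrix α i₀).IsHermitian := by
  refine IsHermitian.add ?_ (isHermitian_diagonal _)
  rw [IsHermitian, conjTranspose_vecMulVec]
  simp

lemma dominantMatrix_eq_diagonal_sign_mul_mul :
    dominantMatrix α i₀ =
      diagonal (fun i => (SignType.sign (α i) : ℝ)) * dominantMatrix |α| i₀ *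
        diagonal (fun i => (SignType.sign (α i) : ℝ)) := by
  ext i j
  rw [mul_diagonal, diagonal_mul]
  by_cases hij : i = j
  · subst hij
    rcases lt_trichotomy (α i) 0 with h | h | h <;>
      simp [dominantMatrix, vecMulVec_apply, h, sign_neg, sign_pos]
  · simp only [dominantMatrix, Matrix.add_apply, vecMulVec_apply, diagonal_apply_ne _ hij,
      add_zero, Pi.abs_apply]
    rw [← mul_assoc, sign_mul_abs, mul_assoc, abs_mul_sign]

lemma dotProduct_mulVec_dominantMatrix_abs (x : ι → ℝ) :
    x ⬝ᵥ dominantMatrix |α| i₀ *ᵥ x =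
      (|α i₀| - tailMass α i₀) * ∑ i ∈ univ.erase i₀, |α i| * (x i₀ + x i) ^ 2
        + (∑ i ∈ univ.erase i₀, |α i| * (x i₀ + x i)) ^ 2 := by
  set S := tailMass α i₀
  set T := ∑ i ∈ univ.erase i₀, |α i| * x i
  set V := ∑ i ∈ univ.erase i₀, |α i| * x i ^ 2
  have split_base (f : ι → ℝ) : ∑ i, f i = f i₀ + ∑ i ∈ univ.erase i₀, f i :=
    (add_sum_erase _ f (mem_univ i₀)).symm
  have linear : ∑ i ∈ univ.erase i₀, |α i| * (x i₀ + x i) = S * x i₀ + T := by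
    simp only [mul_add, sum_add_distrib, ← sum_mul, S, T, tailMass]
  have quadratic : ∑ i ∈ univ.erase i₀, |α i| * (x i₀ + x i) ^ 2 =
      S * x i₀ ^ 2 + 2 * x i₀ * T + V := by
    rw [sum_congr rfl fun i _ => show |α i| * (x i₀ + x i) ^ 2 =
      |α i| * x i₀ ^ 2 + 2 * x i₀ * (|α i| * x i) + |α i| * x i ^ 2 by ring]
    simp only [sum_add_distrib, ← sum_mul, ← mul_sum, S, T, V, tailMass]
  have diag : ∑ i ∈ univ.erase i₀,
      (|α i| * if i = i₀ then S - |α i₀| else |α i₀| - S) * x i ^ 2 = (|α i₀| - S) * V := by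
    rw [mul_sum]
    refine sum_congr rfl fun i hi => ?_
    rw [if_neg (ne_of_mem_erase hi)]
    ring
  rw [dominantMatrix, dotProduct_mulVec_vecMulVec_add_diagonal, dotProduct, split_base, split_base]
  simp only [tailMass_abs, Pi.abs_apply, abs_abs]
  rw [diag, if_true, linear, quadratic]
  ring

lemma posSemidef_dominantMatrix_abs (h : tailMass α i₀ ≤ |α i₀|) :
    (dominantMatrix |α| i₀).PosSemidef := by
  refine posSemidef_iff_dotProduct_mulVec.mpr ⟨isHermitian_dominantMatrix _ _, fun x => ?_⟩
  rw [star_trivial, dotProduct_mulVec_dominantMatrix_abs]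
  have := sub_nonneg.mpr h
  positivity

theorem posSemidef_dominantMatrix (h : tailMass α i₀ ≤ |α i₀|) :
    (dominantMatrix α i₀).PosSemidef := by
  have := (posSemidef_dominantMatrix_abs α i₀ h).conjTranspose_mul_mul_same
    (diagonal fun i => (SignType.sign (α i) : ℝ))
  rwa [diagonal_conjTranspose, star_trivial, ← dominantMatrix_eq_diagonal_sign_mul_mul] at this

lemma dotProduct_mulVec_dominantMatrix_abs_eq_zero_iff (hα : ∀ i, α i ≠ 0)
    (h : tailMass α i₀ < |α i₀|) (x : ι → ℝ) :
    x ⬝ᵥ dominantMatrix |α| i₀ *ᵥ x = 0 ↔ ∀ i ≠ i₀, x i₀ + x i = 0 := by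
  have hgap := sub_pos.mpr h
  have hterm (i) : 0 ≤ |α i| * (x i₀ + x i) ^ 2 := by positivity
  rw [dotProduct_mulVec_dominantMatrix_abs]
  constructor
  · intro hzero i hi
    have hsum : ∑ i ∈ univ.erase i₀, |α i| * (x i₀ + x i) ^ 2 = 0 := by
      have := sum_nonneg fun i (_ : i ∈ univ.erase i₀) => hterm i
      nlinarith [sq_nonneg (∑ i ∈ univ.erase i₀, |α i| * (x i₀ + x i))]
    have := (sum_eq_zero_iff_of_nonneg fun i _ => hterm i).mp hsum i
      (mem_erase.mpr ⟨hi, mem_univ i⟩)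
    simpa [hα i] using this
  · intro hx
    rw [sum_eq_zero fun i hi => by rw [hx i (ne_of_mem_erase hi)]; ring,
      sum_eq_zero fun i hi => by rw [hx i (ne_of_mem_erase hi)]; ring]
    ring

lemma ker_mulVecLin_dominantMatrix_abs (hα : ∀ i, α i ≠ 0) (h : tailMass α i₀ < |α i₀|) :
    LinearMap.ker (dominantMatrix |α| i₀).mulVecLin = ℝ ∙ fun i => if i = i₀ then 1 else -1 := by
  ext x
  rw [LinearMap.mem_ker, mulVecLin_apply,
    ← (posSemidef_dominantMatrix_abs α i₀ h.le).dotProduct_mulVec_zero_iff, star_trivial,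
    dotProduct_mulVec_dominantMatrix_abs_eq_zero_iff α i₀ hα h, Submodule.mem_span_singleton]
  constructor
  · intro hx
    refine ⟨x i₀, funext fun i => ?_⟩
    by_cases hi : i = i₀
    · simp [hi]
    · simp [hi, eq_neg_of_add_eq_zero_right (hx i hi)]
  · rintro ⟨t, rfl⟩ i hi
    simp [hi]

lemma rank_dominantMatrix_abs (hα : ∀ i, α i ≠ 0) (h : tailMass α i₀ < |α i₀|) :
    (dominantMatrix |α| i₀).rank = Fintype.card ι - 1 := by
  have hker : Module.finrank ℝ (LinearMap.ker (dominantMatrix |α| i₀).mulVecLin) = 1 := by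
    rw [ker_mulVecLin_dominantMatrix_abs α i₀ hα h, finrank_span_singleton]
    exact Function.ne_iff.mpr ⟨i₀, by simp⟩
  have := (dominantMatrix |α| i₀).mulVecLin.finrank_range_add_finrank_ker
  rw [hker, Module.finrank_fintype_fun_eq_card] at this
  rw [rank]
  omega

theorem rank_dominantMatrix (hα : ∀ i, α i ≠ 0) (h : tailMass α i₀ < |α i₀|) :
    (dominantMatrix α i₀).rank = Fintype.card ι - 1 := by
  have hunit : IsUnit (diagonal fun i => (SignType.sign (α i) : ℝ)).det := by
    rw [det_diagonal, isUnit_iff_ne_zero, prod_ne_zero_iff]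
    exact fun i _ => left_ne_zero_of_mul (by rw [sign_mul_abs]; exact hα i)
  rw [dominantMatrix_eq_diagonal_sign_mul_mul, rank_mul_eq_left_of_isUnit_det _ _ hunit,
    rank_mul_eq_right_of_isUnit_det _ _ hunit, rank_dominantMatrix_abs α i₀ hα h]

end DominantMatrix

theorem stmt_8 {n : ℕ} (α : Fin (n + 1) → ℝ)
    (M : Matrix (Fin (n + 1)) (Fin (n + 1)) ℝ)
    (hα : ∀ i, α i ≠ 0)
    (hdom : ∑ i ∈ Finset.univ.erase 0, |α i| < |α 0|)
    (hoff : ∀ i j, i ≠ j → M i j = α i * α j)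
    (h11 : M 0 0 = |α 0| * ∑ i ∈ Finset.univ.erase 0, |α i|)
    (hdiag : ∀ i, i ≠ 0 →
      M i i = |α i| * (|α 0| - ∑ j ∈ (Finset.univ.erase 0).erase i, |α j|)) :
    M.PosSemidef ∧ M.rank = n := by
  have hM : M = dominantMatrix α 0 := by
    ext i j
    obtain rfl | hij := eq_or_ne i j
    · obtain rfl | hi := eq_or_ne i 0
      · rw [h11, dominantMatrix_apply_base, tailMass]
      · rw [hdiag i hi, dominantMatrix_apply_self α 0 hi]
    · rw [hoff i j hij, dominantMatrix_apply_of_ne α 0 hij]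
  subst hM
  exact ⟨posSemidef_dominantMatrix α 0 hdom.le, by simp [rank_dominantMatrix α 0 hα hdom]⟩
end
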